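/- Let k ≥ 3, i ∈ ℕ, and 1 ≤ b ≤ k−1, and set B = (ki . b+ki). Then C_B^{(k)}(y) = y^{b+ki} · (H_{k−1}(y))^{i+1} as formal power series over ℚ. -/

import Mathlib

/-- Image of a single letter `m = k*i + j` under the k-Bonacci morphism `φ_k` over ℕ:
`φ_k(ki+j) = (ki)(ki+j+1)` for `0 ≤ j ≤ k-2`, and `φ_k(ki+(k-1)) = ki+k`. -/
def phiLetter (k m : ℕ) : List ℕ :=
  if m % k = k - 1 then [m + 1] else [k * (m / k), m + 1]

/-- The morphism `φ_k`, extended to words by concatenation. -/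
def phi (k : ℕ) (w : List ℕ) : List ℕ := (w.map (phiLetter k)).flatten

/-- `W k n = φ_k^n(0)`, the n-th iterate of `φ_k` applied to the one-letter word `0`. -/
def W (k n : ℕ) : List ℕ := (phi k)^[n] [0]

/-- `shift n w = n ⊕ w`, adding `n` to every letter. -/
def shift (n : ℕ) (w : List ℕ) : List ℕ := w.map (· + n)

/-- `occ B w = |w|_B`, the number of (possibly overlapping) occurrences of `B`
as a factor of `w`, i.e. the number of positions `i` at which `B` is a prefix
of the suffix of `w` starting at `i`. -/
def occ (B w : List ℕ) : ℕ :=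
  ((List.range (w.length + 1)).filter (fun i => decide (B <+: w.drop i))).length

/-- `C k B = C_B^{(k)}(y) = Σ_{n≥0} |W_n^{(k)}|_B yⁿ` as a formal power series over ℚ. -/
noncomputable def C (k : ℕ) (B : List ℕ) : PowerSeries ℚ :=
  PowerSeries.mk (fun n => (occ B (W k n) : ℚ))

/-- `Hgf r = H_r(y)`, the multiplicative inverse of `1 - y - y² - ⋯ - y^r`. -/
noncomputable def Hgf (r : ℕ) : PowerSeries ℚ :=
  (1 - ∑ j ∈ Finset.Icc 1 r, (PowerSeries.X : PowerSeries ℚ) ^ j)⁻¹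

/-- `Ggf r = G_r(y) = (1 - y^r)·H_r(y) - 1`. -/
noncomputable def Ggf (r : ℕ) : PowerSeries ℚ :=
  (1 - (PowerSeries.X : PowerSeries ℚ) ^ r) * Hgf r - 1

/-- The set `B^{(k)} = B_1^{(k)} ∪ B_2^{(k)} ∪ B_3^{(k)}` of length-2 words. -/
def Bset (k : ℕ) : Set (List ℕ) :=
  {U | (∃ i a : ℕ, 1 ≤ a ∧ U = [a + k * i, k + k * i]) ∨
       (∃ i b : ℕ, 1 ≤ b ∧ b ≤ k - 1 ∧ U = [k * i, b + k * i]) ∨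
       (∃ a : ℕ, 1 ≤ a ∧ U = [a, 0])}

/-- The list of blocks in the decomposition of `W_n^{(k)}` for `n ≥ k`:
`W_{n-1}, …, W_{n-k+1}, k ⊕ W_{n-k}`. -/
def blocks (k n : ℕ) : List (List ℕ) :=
  (List.range (k - 1)).map (fun j => W k (n - 1 - j)) ++ [shift k (W k (n - k))]

lemma W_zero (k : ℕ) : W k 0 = [0] := rfl

lemma W_succ (k n : ℕ) : W k (n + 1) = phi k (W k n) :=
  Function.iterate_succ_apply' (phi k) n [0]

lemma phi_nil (k : ℕ) : phi k [] = [] := rfl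

lemma phi_cons (k m : ℕ) (w : List ℕ) : phi k (m :: w) = phiLetter k m ++ phi k w := by
  simp [phi]

lemma occ_nil (B : List ℕ) (hB : B ≠ []) : occ B [] = 0 := by
  simp [occ, List.prefix_iff_eq_take]
  intro h; exact hB (by simpa using h)

lemma occ_cons (B : List ℕ) (a : ℕ) (w : List ℕ) :
    occ B (a :: w) = (if B <+: (a :: w) then 1 else 0) + occ B w := by
  simp only [occ, List.length_cons, List.range_succ_eq_map, List.filter_cons,
    List.filter_map, List.drop_succ_cons, List.drop_zero]
  by_cases h : B <+: a :: w <;>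
    simp [h, Function.comp_def, Nat.succ_eq_add_one, List.drop_succ_cons] <;> omega

-- head of phi is divisible by k
lemma phi_head (k : ℕ) (hk : 1 ≤ k) (w : List ℕ) (z : ℕ) (l : List ℕ)
    (h : phi k w = z :: l) : k ∣ z := by
  match w with
  | [] => simp [phi] at h
  | m :: w' =>
    rw [phi_cons] at h
    unfold phiLetter at h
    split at h
    · rename_i hm
      simp only [List.cons_append] at h
      have hz : z = m + 1 := (List.cons.injEq _ _ _ _ ▸ h).1.symm
      have hd := Nat.div_add_mod m k
      have hr : k * (m / k + 1) = k * (m / k) + k := by ring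
      exact ⟨m / k + 1, by omega⟩
    · simp only [List.cons_append] at h
      have hz : z = k * (m / k) := (List.cons.injEq _ _ _ _ ▸ h).1.symm
      exact ⟨m / k, hz⟩

lemma not_prefix_boundary (k i b : ℕ) (hk : 1 ≤ k) (hb1 : 1 ≤ b) (hb2 : b < k)
    (x : ℕ) (w : List ℕ) : ¬ ([k * i, k * i + b] <+: x :: phi k w) := by
  rintro ⟨t, ht⟩
  simp only [List.cons_append, List.cons.injEq] at ht
  obtain ⟨hx, ht2⟩ := ht
  -- phi k w = (k*i+b) :: t
  have hd : k ∣ k * i + b := phi_head k hk w _ t ht2.symm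
  have : k ∣ b := (Nat.dvd_add_right ⟨i, rfl⟩).mp hd
  have := Nat.le_of_dvd (by omega) this
  omega

lemma occ_phi (k i b : ℕ) (hk : 1 ≤ k) (hb1 : 1 ≤ b) (hb2 : b < k) :
    ∀ w : List ℕ, occ [k * i, k * i + b] (phi k w) = w.count (k * i + b - 1) := by
  intro w
  induction w with
  | nil => simp [phi, occ_nil]
  | cons m w ih =>
    rw [phi_cons]
    unfold phiLetter
    have hmod : (k * i + b - 1) % k = b - 1 := by
      have h1 : k * i + b - 1 = k * i + (b - 1) := by omega
      rw [h1, Nat.mul_add_mod, Nat.mod_eq_of_lt (by omega)]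
    split
    · rename_i hm
      -- phiLetter = [m+1]
      rw [List.singleton_append, occ_cons,
        if_neg (not_prefix_boundary k i b hk hb1 hb2 _ w), ih, List.count_cons]
      have hne : ¬ (m = k * i + b - 1) := by
        intro h; rw [h, hmod] at hm; omega
      simp [hne]
    · rename_i hm
      -- phiLetter = [k*(m/k), m+1]
      rw [List.cons_append, List.singleton_append, occ_cons, occ_cons,
        if_neg (not_prefix_boundary k i b hk hb1 hb2 _ w), ih, List.count_cons]
      have hpre : ([k * i, k * i + b] <+: k * (m / k) :: (m + 1) :: phi k w)
          ↔ m = k * i + b - 1 := by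
        constructor
        · rintro ⟨t, ht⟩
          simp only [List.cons_append, List.cons.injEq] at ht
          omega
        · intro h
          subst h
          have hdiv : (k * i + b - 1) / k = i := by
            have h1 : k * i + b - 1 = k * i + (b - 1) := by omega
            rw [h1, Nat.mul_add_div (by omega), Nat.div_eq_of_lt (by omega), Nat.add_zero]
          refine ⟨phi k w, ?_⟩
          have hb' : k * i + b - 1 + 1 = k * i + b := by omega
          simp only [List.cons_append, List.nil_append, hdiv, hb']
      simp only [hpre]
      by_cases h : m = k * i + b - 1 <;> simp [h] <;> omega

lemma count_phi_ne (k m : ℕ) (hk : 1 ≤ k) (hm : m % k ≠ 0) (w : List ℕ) :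
    (phi k w).count m = w.count (m - 1) := by
  have hm1 : 1 ≤ m := Nat.pos_of_ne_zero (fun h => by subst h; simp at hm)
  induction w with
  | nil => simp [phi]
  | cons m' w ih =>
    rw [phi_cons, List.count_append, ih, List.count_cons]
    unfold phiLetter
    split
    · rename_i h
      simp only [List.count_cons, List.count_nil, beq_iff_eq]
      have : (m' + 1 = m) ↔ (m' = m - 1) := by omega
      simp only [this]
      omega
    · rename_i h
      have hne : ¬ (k * (m' / k) = m) := by
        intro he
        rw [← he, Nat.mul_mod_right] at hm
        exact hm rfl
      simp only [List.count_cons, List.count_nil, beq_iff_eq]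
      have : (m' + 1 = m) ↔ (m' = m - 1) := by omega
      simp only [this]
      rw [if_neg hne]
      omega

lemma sum_indicator (c n m' : ℕ) :
    (∑ j ∈ Finset.range n, if m' = c + j then (1:ℕ) else 0)
      = if c ≤ m' ∧ m' < c + n then 1 else 0 := by
  induction n with
  | zero => simp only [Finset.range_zero, Finset.sum_empty]; split_ifs <;> omega
  | succ n ih => rw [Finset.sum_range_succ, ih]; split_ifs <;> omega

lemma count_phi_mul (k i : ℕ) (hk : 2 ≤ k) (w : List ℕ) :
    (phi k w).count (k * i) =
      (if 1 ≤ i then w.count (k * i - 1) else 0)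
      + ∑ j ∈ Finset.range (k - 1), w.count (k * i + j) := by
  induction w with
  | nil => simp [phi]
  | cons m' w ih =>
    rw [phi_cons, List.count_append, ih]
    have hsplit : ∑ j ∈ Finset.range (k - 1), (m' :: w).count (k * i + j)
        = (∑ j ∈ Finset.range (k - 1), w.count (k * i + j))
          + (if k * i ≤ m' ∧ m' < k * i + (k - 1) then 1 else 0) := by
      rw [← sum_indicator (k * i) (k - 1) m', ← Finset.sum_add_distrib]
      refine Finset.sum_congr rfl (fun j _ => ?_)
      rw [List.count_cons]
      simp only [beq_iff_eq]
    have hcons : (if 1 ≤ i then (m' :: w).count (k * i - 1) else 0)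
        = (if 1 ≤ i then w.count (k * i - 1) else 0)
          + (if 1 ≤ i ∧ m' = k * i - 1 then 1 else 0) := by
      rw [List.count_cons]
      simp only [beq_iff_eq]
      split_ifs <;> omega
    rw [hsplit, hcons]
    unfold phiLetter
    have hd := Nat.div_add_mod m' k
    have hmlt := Nat.mod_lt m' (show 0 < k by omega)
    split
    · rename_i h
      have hbound : ¬ (k * i ≤ m' ∧ m' < k * i + (k - 1)) := by
        rintro ⟨h1, h2⟩
        obtain ⟨t, rfl⟩ : ∃ t, m' = k * i + t := ⟨m' - k * i, by omega⟩
        rw [Nat.mul_add_mod, Nat.mod_eq_of_lt (by omega)] at h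
        omega
      have heq : (m' + 1 = k * i) ↔ (1 ≤ i ∧ m' = k * i - 1) := by
        rcases Nat.eq_zero_or_pos i with h0 | h0
        · subst h0; simp
        · have : k ≤ k * i := Nat.le_mul_of_pos_right k h0
          omega
      simp only [List.count_cons, List.count_nil, beq_iff_eq, heq]
      split_ifs <;> omega
    · rename_i h
      have hA : ¬ (m' + 1 = k * i) := by
        intro he
        have h1 : m' + 1 = k * (m' / k) + (m' % k + 1) := by omega
        have h2 : (m' + 1) % k = m' % k + 1 := by
          rw [h1, Nat.mul_add_mod, Nat.mod_eq_of_lt (by omega)]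
        rw [he, Nat.mul_mod_right] at h2
        omega
      have hB : (k * (m' / k) = k * i) ↔ (k * i ≤ m' ∧ m' < k * i + (k - 1)) := by
        constructor
        · intro he
          have hq : m' / k = i := Nat.eq_of_mul_eq_mul_left (by omega) he
          rw [hq] at hd
          omega
        · rintro ⟨h1, h2⟩
          obtain ⟨t, rfl⟩ : ∃ t, m' = k * i + t := ⟨m' - k * i, by omega⟩
          rw [Nat.mul_add_div (by omega), Nat.div_eq_of_lt (by omega : t < k)]
          simp
      have hC : ¬ (1 ≤ i ∧ m' = k * i - 1) := by
        rintro ⟨h1, h2⟩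
        have hki : k * i = k * (i - 1) + k := by
          have h3 : i - 1 + 1 = i := by omega
          calc k * i = k * (i - 1 + 1) := by rw [h3]
          _ = k * (i - 1) + k := by ring
        have hm' : m' = k * (i - 1) + (k - 1) := by omega
        rw [hm', Nat.mul_add_mod, Nat.mod_eq_of_lt (by omega)] at h
        exact h rfl
      simp only [List.count_cons, List.count_nil, beq_iff_eq, hB]
      rw [if_neg hA]
      split_ifs <;> omega

open PowerSeries

noncomputable def auxG (k m : ℕ) : PowerSeries ℚ :=
  PowerSeries.mk (fun n => ((W k n).count m : ℚ))

-- the polynomial 1 - y - ... - y^{k-1}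
noncomputable def auxS (k : ℕ) : PowerSeries ℚ :=
  ∑ j ∈ Finset.Icc 1 (k - 1), (PowerSeries.X : PowerSeries ℚ) ^ j

lemma S_eq (k : ℕ) : auxS k = ∑ j ∈ Finset.range (k - 1), (X : PowerSeries ℚ) ^ (j + 1) := by
  unfold auxS
  induction (k - 1) with
  | zero => simp
  | succ n ih =>
    rw [Finset.sum_range_succ, ← ih, Finset.sum_Icc_succ_top (by omega)]

lemma constCoeff_S (k : ℕ) : constantCoeff (auxS k) = 0 := by
  unfold auxS
  rw [map_sum]
  refine Finset.sum_eq_zero (fun j hj => ?_)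
  rw [← coeff_zero_eq_constantCoeff, coeff_X_pow]
  have : j ≠ 0 := by have := (Finset.mem_Icc.mp hj).1; omega
  simp [Ne.symm this]

lemma one_sub_S_mul_H (k : ℕ) : (1 - auxS k) * Hgf (k - 1) = 1 := by
  show (1 - auxS k) * (1 - auxS k)⁻¹ = 1
  apply PowerSeries.mul_inv_cancel
  rw [map_sub, map_one, constCoeff_S]
  norm_num

lemma H_cancel (k : ℕ) {A B : PowerSeries ℚ} (h : (1 - auxS k) * A = B) :
    A = Hgf (k - 1) * B := by
  have h2 : Hgf (k - 1) * ((1 - auxS k) * A) = Hgf (k - 1) * B := by rw [h]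
  rwa [← mul_assoc, mul_comm (Hgf (k - 1)) (1 - auxS k), one_sub_S_mul_H, one_mul] at h2

lemma G_coeff_zero (k m : ℕ) : (coeff 0) (auxG k m) = if m = 0 then 1 else 0 := by
  rw [auxG, coeff_mk]
  show (((W k 0).count m : ℚ)) = _
  have : W k 0 = [0] := rfl
  rw [this]
  rcases eq_or_ne m 0 with h | h
  · subst h; simp
  · simp [h, Ne.symm h]

lemma G_coeff_succ (k m n : ℕ) : (coeff (n + 1)) (auxG k m) = ((phi k (W k n)).count m : ℚ) := by
  rw [auxG, coeff_mk, W_succ]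

-- shift lemma
lemma G_shift (k m : ℕ) (hk : 1 ≤ k) (hm : m % k ≠ 0) :
    auxG k m = X * auxG k (m - 1) := by
  ext n
  cases n with
  | zero =>
    rw [coeff_zero_eq_constantCoeff, map_mul, constantCoeff_X, zero_mul,
      ← coeff_zero_eq_constantCoeff, G_coeff_zero]
    have : m ≠ 0 := fun h => by subst h; simp at hm
    simp [this]
  | succ n =>
    rw [coeff_succ_X_mul, G_coeff_succ, count_phi_ne k m hk hm, auxG, coeff_mk]

lemma G_shift_pow (k i j : ℕ) (hk : 2 ≤ k) (hj : j ≤ k - 1) :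
    auxG k (k * i + j) = X ^ j * auxG k (k * i) := by
  induction j with
  | zero => simp
  | succ j ih =>
    have hj' : j ≤ k - 1 := by omega
    have hmod : (k * i + (j + 1)) % k = j + 1 := by
      rw [Nat.mul_add_mod, Nat.mod_eq_of_lt (by omega)]
    rw [G_shift k (k * i + (j + 1)) (by omega) (by omega)]
    have : k * i + (j + 1) - 1 = k * i + j := by omega
    rw [this, ih hj', pow_succ]
    ring

lemma G_zero_eq (k : ℕ) (hk : 2 ≤ k) :
    auxG k 0 = 1 + ∑ j ∈ Finset.range (k - 1), X * auxG k j := by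
  ext n
  cases n with
  | zero =>
    rw [G_coeff_zero]
    simp only [map_add, map_sum, coeff_zero_eq_constantCoeff, map_one, map_mul,
      constantCoeff_X, zero_mul, Finset.sum_const_zero]
    simp
  | succ n =>
    rw [G_coeff_succ]
    have h0 : (phi k (W k n)).count 0 = (phi k (W k n)).count (k * 0) := by norm_num
    rw [h0, count_phi_mul k 0 hk]
    simp only [map_add, map_sum, coeff_succ_X_mul]
    rw [coeff_one]
    simp only [if_neg (Nat.succ_ne_zero n)]
    push_cast
    simp [auxG, coeff_mk]

lemma G_zero_H (k : ℕ) (hk : 2 ≤ k) : (1 - auxS k) * auxG k 0 = 1 := by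
  have h1 := G_zero_eq k hk
  have h2 : ∑ j ∈ Finset.range (k - 1), X * auxG k j = auxS k * auxG k 0 := by
    rw [S_eq, Finset.sum_mul]
    refine Finset.sum_congr rfl (fun j hj => ?_)
    have hj' : j ≤ k - 1 := by have := Finset.mem_range.mp hj; omega
    have := G_shift_pow k 0 j hk hj'
    rw [Nat.mul_zero, Nat.zero_add] at this
    rw [this, pow_succ]
    ring
  rw [h2] at h1
  linear_combination h1

lemma G_mul_eq (k i : ℕ) (hk : 2 ≤ k) (hi : 1 ≤ i) :
    auxG k (k * i) = X * auxG k (k * i - 1) + ∑ j ∈ Finset.range (k - 1), X * auxG k (k * i + j) := by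
  ext n
  cases n with
  | zero =>
    rw [coeff_zero_eq_constantCoeff]
    simp only [map_add, map_sum, map_mul, constantCoeff_X, zero_mul,
      Finset.sum_const_zero, add_zero, ← coeff_zero_eq_constantCoeff, G_coeff_zero]
    have : k * i ≠ 0 := by
      have : k ≤ k * i := Nat.le_mul_of_pos_right k hi
      omega
    simp [this]
  | succ n =>
    rw [G_coeff_succ, count_phi_mul k i hk, if_pos hi]
    simp only [map_add, map_sum, coeff_succ_X_mul]
    push_cast
    simp [auxG, coeff_mk]

lemma G_rec (k i : ℕ) (hk : 2 ≤ k) :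
    (1 - auxS k) * auxG k (k * (i + 1)) = X ^ k * auxG k (k * i) := by
  have h1 := G_mul_eq k (i + 1) hk (by omega)
  have h2 : auxG k (k * (i + 1) - 1) = X ^ (k - 1) * auxG k (k * i) := by
    have he : k * (i + 1) - 1 = k * i + (k - 1) := by
      have : k * (i + 1) = k * i + k := by ring
      omega
    rw [he]
    exact G_shift_pow k i (k - 1) hk le_rfl
  have h3 : ∑ j ∈ Finset.range (k - 1), X * auxG k (k * (i + 1) + j)
      = auxS k * auxG k (k * (i + 1)) := by
    rw [S_eq, Finset.sum_mul]
    refine Finset.sum_congr rfl (fun j hj => ?_)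
    have hj' : j ≤ k - 1 := by have := Finset.mem_range.mp hj; omega
    rw [G_shift_pow k (i + 1) j hk hj', pow_succ]
    ring
  rw [h2, h3] at h1
  have hX : X * (X ^ (k - 1) * auxG k (k * i)) = X ^ k * auxG k (k * i) := by
    rw [← mul_assoc, ← pow_succ']
    congr 2
    omega
  rw [hX] at h1
  linear_combination h1

lemma G_main (k : ℕ) (hk : 2 ≤ k) :
    ∀ i, auxG k (k * i) = X ^ (k * i) * Hgf (k - 1) ^ (i + 1) := by
  intro i
  induction i with
  | zero =>
    have := H_cancel k (G_zero_H k hk)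
    rw [Nat.mul_zero, this]
    simp
  | succ i ih =>
    have := H_cancel k (G_rec k i hk)
    rw [this, ih]
    rw [show k * (i + 1) = k * i + k by ring, pow_add, show i + 1 + 1 = (i + 1) + 1 from rfl,
      pow_succ]
    ring


theorem stmt13 (k i b : ℕ) (hk : 3 ≤ k) (hb1 : 1 ≤ b) (hb2 : b ≤ k - 1) :
    C k [k * i, b + k * i] = PowerSeries.X ^ (b + k * i) * Hgf (k - 1) ^ (i + 1) := by

  have hk2 : 2 ≤ k := by omega
  have hbk : b < k := by omega
  rw [add_comm b (k * i)]
  have hC : C k [k * i, k * i + b] = X * auxG k (k * i + b - 1) := by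
    ext n
    cases n with
    | zero =>
      rw [coeff_zero_eq_constantCoeff, map_mul, constantCoeff_X, zero_mul]
      rw [_root_.C, ← coeff_zero_eq_constantCoeff, coeff_mk]
      have hW0 : W k 0 = [0] := rfl
      have hnp : ¬ ([k * i, k * i + b] <+: [0]) := by
        rintro ⟨t, ht⟩
        simp at ht
      rw [hW0]
      have : occ [k * i, k * i + b] [0] = 0 := by
        rw [occ_cons, if_neg hnp, occ_nil _ (by simp)]
      rw [this]
      norm_num
    | succ n =>
      rw [coeff_succ_X_mul, _root_.C, coeff_mk, W_succ,
        occ_phi k i b (by omega) hb1 hbk, auxG, coeff_mk]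
  rw [hC]
  have he : k * i + b - 1 = k * i + (b - 1) := by omega
  rw [he, G_shift_pow k i (b - 1) hk2 (by omega), G_main k hk2 i]
  rw [show k * i + b = 1 + (b - 1) + k * i by omega, pow_add, pow_add]
  ring
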